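/- arXiv:1110.3504 — 2 statements merged into one kernel-verified Lean document; each statement's English description precedes it below -/
import Mathlib

section
/- Let A, B be finite von Neumann algebras, H_A a right Hilbert A-module and _A K a left Hilbert A-module. For x ∈ (A^op)' ∩ B(H) and y ∈ A' ∩ B(K), the map ξ ⊗ η ↦ (xξ) ⊗ (yη) on the algebraic relative tensor product D(H_A) ⊙_A D(_A K) extends to a bounded operator x ⊗_A y on H ⊗_A K with ‖x ⊗_A y‖ ≤ ‖x‖·‖y‖. -/
open scoped InnerProductSpace ComplexOrder


section Aux

variable {E : Type*} [NormedAddCommGroup E] [InnerProductSpace ℂ E] [CompleteSpace E]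

lemma aux_commute_aeval {L b : E →L[ℂ] E} (hb : Commute b L) (p : Polynomial ℝ) :
    Commute b (Polynomial.aeval L p) := by
  induction p using Polynomial.induction_on' with
  | add p1 p2 h1 h2 => rw [map_add]; exact h1.add_right h2
  | monomial n a =>
    rw [Polynomial.aeval_monomial]
    have h1 : Commute b (algebraMap ℝ (E →L[ℂ] E) a) := (Algebra.commutes a b).symm
    exact h1.mul_right (hb.pow_right n)

lemma aux_commute_cfc {L b : E →L[ℂ] E} (hL : IsSelfAdjoint L) (hb : Commute b L)
    {f : ℝ → ℝ} (hf : Continuous f) : Commute b (cfc f L) := by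
  rcases subsingleton_or_nontrivial E with hE | hE
  · haveI : Subsingleton (E →L[ℂ] E) := ⟨fun f g => by ext v; exact Subsingleton.elim _ _⟩
    exact Subsingleton.elim _ _
  · set c := cfc f L with hc
    have key : ∀ ε : ℝ, 0 < ε → ‖b * c - c * b‖ ≤ 2 * ‖b‖ * ε := by
      intro ε hε
      obtain ⟨p, hp⟩ := exists_polynomial_near_of_continuousOn (-‖L‖) ‖L‖ f
        hf.continuousOn ε hε
      have hspec : spectrum ℝ L ⊆ Set.Icc (-‖L‖) ‖L‖ := by
        intro t ht
        have h1 : ‖t‖ ≤ ‖L‖ := spectrum.norm_le_norm_of_mem ht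
        rw [Real.norm_eq_abs] at h1
        exact Set.mem_Icc.mpr (abs_le.mp h1)
      set q : E →L[ℂ] E := Polynomial.aeval L p with hq
      have hbq : Commute b q := aux_commute_aeval hb p
      have hcq : ‖c - q‖ ≤ ε := by
        rw [hc, hq, ← cfc_polynomial p L hL,
          ← cfc_sub f (fun t => Polynomial.eval t p) L hf.continuousOn
            (Polynomial.continuous_aeval p).continuousOn]
        apply norm_cfc_le hε.le
        intro t ht
        rw [Real.norm_eq_abs, abs_sub_comm]
        exact (hp t (hspec ht)).le
      have hrw : b * c - c * b = b * (c - q) - (c - q) * b := by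
        rw [mul_sub, sub_mul, hbq.eq]; abel
      calc ‖b * c - c * b‖ = ‖b * (c - q) - (c - q) * b‖ := by rw [hrw]
        _ ≤ ‖b * (c - q)‖ + ‖(c - q) * b‖ := norm_sub_le _ _
        _ ≤ ‖b‖ * ‖c - q‖ + ‖c - q‖ * ‖b‖ := add_le_add (norm_mul_le _ _) (norm_mul_le _ _)
        _ ≤ ‖b‖ * ε + ε * ‖b‖ := add_le_add
            (mul_le_mul_of_nonneg_left hcq (norm_nonneg b))
            (mul_le_mul_of_nonneg_right hcq (norm_nonneg b))
        _ = 2 * ‖b‖ * ε := by ring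
    have h0 : ‖b * c - c * b‖ ≤ 0 := by
      by_contra h
      push_neg at h
      have hd : (0:ℝ) < 2 * ‖b‖ + 1 := by positivity
      have hε : 0 < ‖b * c - c * b‖ / (2 * ‖b‖ + 1) := by positivity
      have hk := key _ hε
      have hlt : 2 * ‖b‖ * (‖b * c - c * b‖ / (2 * ‖b‖ + 1)) < ‖b * c - c * b‖ := by
        rw [mul_div_assoc', div_lt_iff₀ hd]
        nlinarith [norm_nonneg b]
      linarith
    have heq := le_antisymm h0 (norm_nonneg _)
    rw [norm_eq_zero, sub_eq_zero] at heq
    exact heq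

lemma aux_key_ineq (L Y : E →L[ℂ] E) (hL : ∀ v, 0 ≤ ⟪L v, v⟫_ℂ) (hC : Commute Y L)
    {cY : ℝ} (hcY : ‖Y‖ ≤ cY) (v : E) :
    RCLike.re ⟪L (Y v), Y v⟫_ℂ ≤ cY ^ 2 * RCLike.re ⟪L v, v⟫_ℂ := by
  have hpos : L.IsPositive := by
    rw [ContinuousLinearMap.isPositive_iff_complex]
    intro w
    obtain ⟨h1, h2⟩ := Complex.le_def.mp (hL w)
    simp only [Complex.zero_re, Complex.zero_im] at h1 h2
    refine ⟨?_, by simpa using h1⟩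
    apply Complex.ext <;> simp [← h2]
  have hsa : IsSelfAdjoint L := hpos.isSelfAdjoint
  have hLnn : (0 : E →L[ℂ] E) ≤ L := (ContinuousLinearMap.nonneg_iff_isPositive L).mpr hpos
  set s := cfc Real.sqrt L with hs
  have hssa : IsSelfAdjoint s := cfc_predicate Real.sqrt L
  have hss : s * s = L := by
    have e1 : cfc (fun x : ℝ => Real.sqrt x * Real.sqrt x) L = cfc (id : ℝ → ℝ) L :=
      cfc_congr (fun t ht => Real.mul_self_sqrt (spectrum_nonneg_of_nonneg hLnn ht))
    rw [hs, ← cfc_mul Real.sqrt Real.sqrt L Real.continuous_sqrt.continuousOn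
      Real.continuous_sqrt.continuousOn, e1, cfc_id ℝ L hsa]
  have hYs : Commute Y s := aux_commute_cfc hsa hC Real.continuous_sqrt
  have hsym := ContinuousLinearMap.isSelfAdjoint_iff_isSymmetric.mp hssa
  have hinner : ∀ w, RCLike.re ⟪L w, w⟫_ℂ = ‖s w‖ ^ 2 := by
    intro w
    have h1 : (s * s) w = s (s w) := rfl
    have h2 : ⟪s (s w), w⟫_ℂ = ⟪s w, s w⟫_ℂ := hsym (s w) w
    rw [← hss, h1, h2, inner_self_eq_norm_sq]
  rw [hinner, hinner]
  have h2 : s (Y v) = Y (s v) := by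
    calc s (Y v) = (s * Y) v := rfl
      _ = (Y * s) v := by rw [hYs.symm.eq]
      _ = Y (s v) := rfl
  rw [h2]
  have h3 : ‖Y (s v)‖ ≤ cY * ‖s v‖ :=
    le_trans (Y.le_opNorm (s v)) (mul_le_mul_of_nonneg_right hcY (norm_nonneg _))
  calc ‖Y (s v)‖ ^ 2 ≤ (cY * ‖s v‖) ^ 2 := pow_le_pow_left₀ (norm_nonneg _) h3 2
    _ = cY ^ 2 * ‖s v‖ ^ 2 := by ring

end Aux



set_option synthInstance.maxHeartbeats 1000000 in
lemma aux_block_ineq {k : ℕ} {E : Type*} [NormedAddCommGroup E] [InnerProductSpace ℂ E]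
    [CompleteSpace E] (a : Fin k → Fin k → (E →L[ℂ] E)) (y : E →L[ℂ] E)
    (hy : ∀ i j, y ∘L a i j = a i j ∘L y)
    (hpos : ∀ w : Fin k → E, 0 ≤ ∑ i, ∑ j, ⟪(a i j) (w j), w i⟫_ℂ)
    (v : Fin k → E) :
    (∑ i, ∑ j, ⟪(a i j) (y (v j)), y (v i)⟫_ℂ).re
      ≤ ‖y‖ ^ 2 * (∑ i, ∑ j, ⟪(a i j) (v j), v i⟫_ℂ).re := by
  let E' := PiLp 2 (fun _ : Fin k => E)
  haveI : CompleteSpace E' := inferInstance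
  let eqv := PiLp.continuousLinearEquiv 2 ℂ (fun _ : Fin k => E)
  let Lop : E' →L[ℂ] E' := eqv.symm.toContinuousLinearMap ∘L
    ((ContinuousLinearMap.pi fun i => ∑ j, (a i j) ∘L (ContinuousLinearMap.proj j)) ∘L
      eqv.toContinuousLinearMap)
  let Yop : E' →L[ℂ] E' := eqv.symm.toContinuousLinearMap ∘L
    ((ContinuousLinearMap.pi fun i => y ∘L (ContinuousLinearMap.proj i)) ∘L
      eqv.toContinuousLinearMap)
  have hLapp : ∀ (w : E') (i), Lop w i = ∑ j, a i j (w j) := by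
    intro w i
    show (ContinuousLinearMap.pi fun i => ∑ j, (a i j) ∘L (ContinuousLinearMap.proj j))
      (eqv w) i = _
    rw [ContinuousLinearMap.pi_apply, ContinuousLinearMap.sum_apply]
    exact Finset.sum_congr rfl fun j _ => rfl
  have hYapp : ∀ (w : E') (i), Yop w i = y (w i) := fun w i => rfl
  have hLinner : ∀ (w w' : E'), ⟪Lop w, w'⟫_ℂ = ∑ i, ∑ j, ⟪(a i j) (w j), w' i⟫_ℂ := by
    intro w w'
    rw [PiLp.inner_apply]
    refine Finset.sum_congr rfl fun i _ => ?_
    rw [hLapp, sum_inner]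
  have hLpos : ∀ w : E', 0 ≤ ⟪Lop w, w⟫_ℂ := fun w => hLinner w w ▸ hpos w
  have hcomm : Commute Yop Lop := by
    rw [Commute, SemiconjBy]
    ext w i
    show Yop (Lop w) i = Lop (Yop w) i
    rw [hYapp, hLapp, hLapp, map_sum]
    refine Finset.sum_congr rfl fun j _ => ?_
    have := congrFun (congrArg (fun (f : E →L[ℂ] E) => (f : E → E)) (hy i j)) (w j)
    rw [hYapp]
    simpa using this
  have hYnorm : ‖Yop‖ ≤ ‖y‖ := by
    refine ContinuousLinearMap.opNorm_le_bound _ (norm_nonneg y) fun w => ?_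
    have h2 : ‖Yop w‖ ^ 2 ≤ (‖y‖ * ‖w‖) ^ 2 := by
      rw [PiLp.norm_sq_eq_of_L2, mul_pow, PiLp.norm_sq_eq_of_L2, Finset.mul_sum]
      refine Finset.sum_le_sum fun i _ => ?_
      rw [hYapp, ← mul_pow]
      exact pow_le_pow_left₀ (norm_nonneg _) (y.le_opNorm (w i)) 2
    nlinarith [norm_nonneg (Yop w), mul_nonneg (norm_nonneg y) (norm_nonneg w)]
  set v' : E' := (WithLp.equiv 2 (∀ _ : Fin k, E)).symm v with hv'
  have hv'app : ∀ i, v' i = v i := fun i => rfl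
  have hkey := aux_key_ineq Lop Yop hLpos hcomm hYnorm v'
  have e1 : ⟪Lop (Yop v'), Yop v'⟫_ℂ = ∑ i, ∑ j, ⟪(a i j) (y (v j)), y (v i)⟫_ℂ := by
    rw [hLinner]
    exact Finset.sum_congr rfl fun i _ => Finset.sum_congr rfl fun j _ => by
      rw [hYapp, hv'app, hYapp, hv'app]
  have e2 : ⟪Lop v', v'⟫_ℂ = ∑ i, ∑ j, ⟪(a i j) (v j), v i⟫_ℂ := by
    rw [hLinner]
    exact Finset.sum_congr rfl fun i _ => Finset.sum_congr rfl fun j _ => by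
      rw [hv'app, hv'app]
  rw [e1, e2] at hkey
  exact hkey




/-- let `A` be a finite von Neumann algebra, `H_A` a right and `_A K` a
left Hilbert `A`-module, and `T = H ⊗_A K` their relative tensor product: `tens ξ η = ξ ⊗ η`
has dense span, is middle `A`-linear, and satisfies
`⟪ξ⊗η, ξ'⊗η'⟫ = ⟪⟨ξ'|ξ⟩_A η, η'⟫_K = ⟪ξ·(_A⟨η,η'⟩), ξ'⟫_H`, where the `A`-valued inner
products have positive Gram matrices.  If `x` commutes with the right `A`-action on `H` and
`y` commutes with the left `A`-action on `K`, then `ξ⊗η ↦ (xξ)⊗(yη)` extends to a bounded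
operator `x ⊗_A y` on `T` with `‖x ⊗_A y‖ ≤ ‖x‖·‖y‖`. -/
theorem stmt10 {A H K T : Type*} [Ring A] [StarRing A] [Algebra ℂ A]
    [NormedAddCommGroup H] [InnerProductSpace ℂ H] [CompleteSpace H]
    [NormedAddCommGroup K] [InnerProductSpace ℂ K] [CompleteSpace K]
    [NormedAddCommGroup T] [InnerProductSpace ℂ T] [CompleteSpace T]
    (rH : Aᵐᵒᵖ →ₐ[ℂ] (H →L[ℂ] H)) (lK : A →ₐ[ℂ] (K →L[ℂ] K))
    (innH : H → H → A) (innK : K → K → A)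
    (tens : H →ₗ[ℂ] K →ₗ[ℂ] T)
    (hdense : Dense (Submodule.span ℂ {t : T | ∃ ξ η, t = tens ξ η} : Set T))
    (hmid : ∀ (a : A) (ξ : H) (η : K),
      tens (rH (MulOpposite.op a) ξ) η = tens ξ (lK a η))
    (hip1 : ∀ (ξ ξ' : H) (η η' : K),
      (⟪tens ξ η, tens ξ' η'⟫_ℂ) = ⟪lK (innH ξ' ξ) η, η'⟫_ℂ)
    (hip2 : ∀ (ξ ξ' : H) (η η' : K),
      (⟪tens ξ η, tens ξ' η'⟫_ℂ) = ⟪rH (MulOpposite.op (innK η' η)) ξ, ξ'⟫_ℂ)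
    (hposH : ∀ (k : ℕ) (ξ : Fin k → H) (η : Fin k → K),
      0 ≤ ∑ i, ∑ j, ⟪lK (innH (ξ i) (ξ j)) (η j), η i⟫_ℂ)
    (hposK : ∀ (k : ℕ) (η : Fin k → K) (ξ : Fin k → H),
      0 ≤ ∑ i, ∑ j, ⟪rH (MulOpposite.op (innK (η i) (η j))) (ξ j), ξ i⟫_ℂ)
    (x : H →L[ℂ] H) (hx : ∀ b : Aᵐᵒᵖ, x.comp (rH b) = (rH b).comp x)
    (y : K →L[ℂ] K) (hy : ∀ a : A, y.comp (lK a) = (lK a).comp y) :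
    ∃ z : T →L[ℂ] T, ‖z‖ ≤ ‖x‖ * ‖y‖ ∧ ∀ (ξ : H) (η : K), z (tens ξ η) = tens (x ξ) (y η) := by
  classical
  set π : TensorProduct ℂ H K →ₗ[ℂ] T := TensorProduct.lift tens with hπ
  -- norms of finite sums of simple tensors
  have hnormsq : ∀ (n : ℕ) (ξ : Fin n → H) (η : Fin n → K),
      ‖∑ i, tens (ξ i) (η i)‖ ^ 2
        = (∑ i, ∑ j, ⟪lK (innH (ξ i) (ξ j)) (η j), η i⟫_ℂ).re := by
    intro n ξ η
    have h1 : ⟪∑ j, tens (ξ j) (η j), ∑ i, tens (ξ i) (η i)⟫_ℂ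
        = ∑ i, ∑ j, ⟪lK (innH (ξ i) (ξ j)) (η j), η i⟫_ℂ := by
      rw [inner_sum]
      refine Finset.sum_congr rfl fun i _ => ?_
      rw [sum_inner]
      exact Finset.sum_congr rfl fun j _ => hip1 (ξ j) (ξ i) (η j) (η i)
    have h2 := inner_self_eq_norm_sq (𝕜 := ℂ) (∑ i, tens (ξ i) (η i))
    rw [← h2, h1]
    rfl
  have hnormsq2 : ∀ (n : ℕ) (ξ : Fin n → H) (η : Fin n → K),
      ‖∑ i, tens (ξ i) (η i)‖ ^ 2
        = (∑ i, ∑ j, ⟪rH (MulOpposite.op (innK (η i) (η j))) (ξ j), ξ i⟫_ℂ).re := by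
    intro n ξ η
    have h1 : ⟪∑ j, tens (ξ j) (η j), ∑ i, tens (ξ i) (η i)⟫_ℂ
        = ∑ i, ∑ j, ⟪rH (MulOpposite.op (innK (η i) (η j))) (ξ j), ξ i⟫_ℂ := by
      rw [inner_sum]
      refine Finset.sum_congr rfl fun i _ => ?_
      rw [sum_inner]
      exact Finset.sum_congr rfl fun j _ => hip2 (ξ j) (ξ i) (η j) (η i)
    have h2 := inner_self_eq_norm_sq (𝕜 := ℂ) (∑ i, tens (ξ i) (η i))
    rw [← h2, h1]
    rfl
  -- decomposition of arbitrary tensors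
  have hdecomp : ∀ t : TensorProduct ℂ H K, ∃ (n : ℕ) (ξ : Fin n → H) (η : Fin n → K),
      (∀ (f : H →ₗ[ℂ] H) (g : K →ₗ[ℂ] K),
        π (TensorProduct.map f g t) = ∑ i, tens (f (ξ i)) (g (η i))) := by
    intro t
    obtain ⟨S, rfl⟩ := TensorProduct.exists_finset t
    refine ⟨S.card, fun i => ((S.equivFin.symm i : H × K)).1,
      fun i => ((S.equivFin.symm i : H × K)).2, fun f g => ?_⟩
    rw [map_sum, map_sum]
    have : ∀ p ∈ S, π (TensorProduct.map f g (p.1 ⊗ₜ[ℂ] p.2)) = tens (f p.1) (g p.2) := by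
      intro p _
      rw [TensorProduct.map_tmul, hπ, TensorProduct.lift.tmul]
    rw [Finset.sum_congr rfl this, ← Finset.sum_coe_sort S (fun p => tens (f p.1) (g p.2)),
      ← Equiv.sum_comp S.equivFin.symm (fun p : ↥S => tens (f (p : H × K).1) (g (p : H × K).2))]
  -- step bounds
  have step_y : ∀ t : TensorProduct ℂ H K,
      ‖π (TensorProduct.map LinearMap.id (y : K →ₗ[ℂ] K) t)‖ ≤ ‖y‖ * ‖π t‖ := by
    intro t
    obtain ⟨n, ξ, η, hrep⟩ := hdecomp t
    have h0 : π t = ∑ i, tens (ξ i) (η i) := by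
      have := hrep LinearMap.id LinearMap.id
      rwa [TensorProduct.map_id, LinearMap.id_apply] at this
    have h1 := hrep LinearMap.id (y : K →ₗ[ℂ] K)
    simp only [LinearMap.id_apply, ContinuousLinearMap.coe_coe] at h1
    have hb := aux_block_ineq (fun i j => lK (innH (ξ i) (ξ j))) y
      (fun i j => hy (innH (ξ i) (ξ j))) (fun w => hposH n ξ w) η
    have e1 := hnormsq n ξ (fun i => y (η i))
    have e2 := hnormsq n ξ η
    rw [h0, h1]
    have hsq : ‖∑ i, tens (ξ i) (y (η i))‖ ^ 2 ≤ (‖y‖ * ‖∑ i, tens (ξ i) (η i)‖) ^ 2 := by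
      rw [e1, mul_pow, e2]
      exact hb
    nlinarith [norm_nonneg (∑ i, tens (ξ i) (y (η i))),
      mul_nonneg (norm_nonneg y) (norm_nonneg (∑ i, tens (ξ i) (η i)))]
  have step_x : ∀ t : TensorProduct ℂ H K,
      ‖π (TensorProduct.map (x : H →ₗ[ℂ] H) LinearMap.id t)‖ ≤ ‖x‖ * ‖π t‖ := by
    intro t
    obtain ⟨n, ξ, η, hrep⟩ := hdecomp t
    have h0 : π t = ∑ i, tens (ξ i) (η i) := by
      have := hrep LinearMap.id LinearMap.id
      rwa [TensorProduct.map_id, LinearMap.id_apply] at this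
    have h1 := hrep (x : H →ₗ[ℂ] H) LinearMap.id
    simp only [LinearMap.id_apply, ContinuousLinearMap.coe_coe] at h1
    have hb := aux_block_ineq (fun i j => rH (MulOpposite.op (innK (η i) (η j)))) x
      (fun i j => hx (MulOpposite.op (innK (η i) (η j)))) (fun w => hposK n η w) ξ
    have e1 := hnormsq2 n (fun i => x (ξ i)) η
    have e2 := hnormsq2 n ξ η
    rw [h0, h1]
    have hsq : ‖∑ i, tens (x (ξ i)) (η i)‖ ^ 2 ≤ (‖x‖ * ‖∑ i, tens (ξ i) (η i)‖) ^ 2 := by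
      rw [e1, mul_pow, e2]
      exact hb
    nlinarith [norm_nonneg (∑ i, tens (x (ξ i)) (η i)),
      mul_nonneg (norm_nonneg x) (norm_nonneg (∑ i, tens (ξ i) (η i)))]
  -- combined bound
  have hsplit : TensorProduct.map (x : H →ₗ[ℂ] H) (y : K →ₗ[ℂ] K)
      = (TensorProduct.map (x : H →ₗ[ℂ] H) LinearMap.id).comp
          (TensorProduct.map LinearMap.id (y : K →ₗ[ℂ] K)) := by
    rw [← TensorProduct.map_comp]
    simp
  have hbound : ∀ t : TensorProduct ℂ H K,
      ‖π (TensorProduct.map (x : H →ₗ[ℂ] H) (y : K →ₗ[ℂ] K) t)‖ ≤ (‖x‖ * ‖y‖) * ‖π t‖ := by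
    intro t
    rw [hsplit]
    calc ‖π (TensorProduct.map (x : H →ₗ[ℂ] H) LinearMap.id
          (TensorProduct.map LinearMap.id (y : K →ₗ[ℂ] K) t))‖
        ≤ ‖x‖ * ‖π (TensorProduct.map LinearMap.id (y : K →ₗ[ℂ] K) t)‖ := step_x _
      _ ≤ ‖x‖ * (‖y‖ * ‖π t‖) :=
          mul_le_mul_of_nonneg_left (step_y t) (norm_nonneg x)
      _ = (‖x‖ * ‖y‖) * ‖π t‖ := by ring
  -- build the extension
  set φ : TensorProduct ℂ H K →ₗ[ℂ] T :=
    π ∘ₗ TensorProduct.map (x : H →ₗ[ℂ] H) (y : K →ₗ[ℂ] K) with hφ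
  have hker : LinearMap.ker π ≤ LinearMap.ker φ := by
    intro u hu
    rw [LinearMap.mem_ker] at hu ⊢
    have := hbound u
    rw [hu, norm_zero, mul_zero] at this
    have h0 := le_antisymm this (norm_nonneg _)
    rwa [norm_eq_zero] at h0
  set ψ : ↥(LinearMap.range π) →ₗ[ℂ] T :=
    ((LinearMap.ker π).liftQ φ hker) ∘ₗ (π.quotKerEquivRange).symm.toLinearMap with hψdef
  have hψ : ∀ u : TensorProduct ℂ H K,
      ψ ⟨π u, LinearMap.mem_range_self π u⟩ = φ u := by
    intro u
    have h1 : (π.quotKerEquivRange).symm ⟨π u, LinearMap.mem_range_self π u⟩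
        = Submodule.Quotient.mk u := by
      rw [LinearEquiv.symm_apply_eq]
      apply Subtype.ext
      exact LinearMap.quotKerEquivRange_apply_mk π u
    rw [hψdef]
    simp only [LinearMap.coe_comp, Function.comp_apply, LinearEquiv.coe_coe, h1,
      Submodule.liftQ_apply]
  have hψbound : ∀ s : ↥(LinearMap.range π), ‖ψ s‖ ≤ (‖x‖ * ‖y‖) * ‖s‖ := by
    rintro ⟨_, u, rfl⟩
    show ‖ψ ⟨π u, LinearMap.mem_range_self π u⟩‖ ≤ (‖x‖ * ‖y‖) * ‖π u‖
    rw [hψ u]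
    exact hbound u
  set ψL : ↥(LinearMap.range π) →L[ℂ] T := ψ.mkContinuous (‖x‖ * ‖y‖) hψbound with hψL
  have hrange_eq : LinearMap.range π
      = Submodule.span ℂ {t : T | ∃ ξ η, t = tens ξ η} := by
    apply le_antisymm
    · rintro _ ⟨u, rfl⟩
      induction u using TensorProduct.induction_on with
      | zero => rw [map_zero]; exact Submodule.zero_mem _
      | tmul ξ η =>
        rw [hπ, TensorProduct.lift.tmul]
        exact Submodule.subset_span ⟨ξ, η, rfl⟩
      | add u v hu hv => rw [map_add]; exact Submodule.add_mem _ hu hv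
    · rw [Submodule.span_le]
      rintro _ ⟨ξ, η, rfl⟩
      exact ⟨ξ ⊗ₜ η, TensorProduct.lift.tmul ξ η⟩
  have hdr : DenseRange ((LinearMap.range π).subtypeL) := by
    have h1 : Set.range ((LinearMap.range π).subtypeL) = (LinearMap.range π : Set T) :=
      Subtype.range_coe
    rw [DenseRange, h1, hrange_eq]
    exact hdense
  have hui : IsUniformInducing ((LinearMap.range π).subtypeL : ↥(LinearMap.range π) → T) :=
    isometry_subtype_coe.isUniformInducing
  refine ⟨ψL.extend (LinearMap.range π).subtypeL, ?_, ?_⟩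
  · have h1 : ∀ s : ↥(LinearMap.range π), ‖s‖ ≤ ((1 : NNReal) : ℝ) * ‖(LinearMap.range π).subtypeL s‖ := by
      intro s
      simp
    calc ‖ψL.extend (LinearMap.range π).subtypeL‖
        ≤ ((1:NNReal) : ℝ) * ‖ψL‖ := ψL.opNorm_extend_le hdr h1
      _ = ‖ψL‖ := by norm_num
      _ ≤ ‖x‖ * ‖y‖ := ψ.mkContinuous_norm_le (by positivity) hψbound
  · intro ξ η
    have hmem : tens ξ η ∈ LinearMap.range π := ⟨ξ ⊗ₜ η, TensorProduct.lift.tmul ξ η⟩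
    have h2 : tens ξ η = (LinearMap.range π).subtypeL ⟨tens ξ η, hmem⟩ := rfl
    rw [h2, ψL.extend_eq hdr hui]
    show ψ ⟨tens ξ η, hmem⟩ = tens (x ξ) (y η)
    have h3 : (⟨tens ξ η, hmem⟩ : ↥(LinearMap.range π))
        = ⟨π (ξ ⊗ₜ η), LinearMap.mem_range_self π (ξ ⊗ₜ η)⟩ := by
      apply Subtype.ext
      show (tens ξ) η = π (ξ ⊗ₜ[ℂ] η)
      exact (TensorProduct.lift.tmul ξ η).symm
    rw [h3, hψ]
    rw [hφ]
    simp only [LinearMap.coe_comp, Function.comp_apply, TensorProduct.map_tmul,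
      ContinuousLinearMap.coe_coe, LinearMap.id_apply]
    rw [hπ, TensorProduct.lift.tmul]
end

section
/- Let G₀ ⊂ G₁ be countable i.c.c. groups with [G₁ : G₀] = ∞ and exactly two double cosets G₀\G₁/G₀, and let K = ℓ²(G₁/G₀) with the natural left translation action of G₁ on K^{⊗n}. Then: (1) the space of G₀-invariant vectors in K^{⊗n} is one-dimensional, spanned by δ_{G₀} ⊗ ··· ⊗ δ_{G₀}; (2) the only G₁-invariant vector in K^{⊗n} is zero. -/
open scoped ENNReal

/-- An `ℓ²` function cannot take a fixed nonzero value on an infinite set. -/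
lemma stmt19_decay {I : Type*} (f : lp (fun _ : I => ℂ) 2) (c : ℂ) (hc : c ≠ 0)
    {S : Set I} (hS : S.Infinite) (hconst : ∀ y ∈ S, (f : I → ℂ) y = c) : False := by
  have hsum : Summable fun i => ‖(f : I → ℂ) i‖ ^ (2 : ℝ≥0∞).toReal :=
    (lp.memℓp f).summable (by norm_num)
  have hpos : (0 : ℝ) < ‖c‖ ^ (2 : ℝ≥0∞).toReal :=
    Real.rpow_pos_of_pos (norm_pos_iff.mpr hc) _
  have hev : ∀ᶠ i in Filter.cofinite,
      ‖(f : I → ℂ) i‖ ^ (2 : ℝ≥0∞).toReal < ‖c‖ ^ (2 : ℝ≥0∞).toReal :=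
    hsum.tendsto_cofinite_zero.eventually_lt_const hpos
  have hfin : {i : I | ¬ ‖(f : I → ℂ) i‖ ^ (2 : ℝ≥0∞).toReal
      < ‖c‖ ^ (2 : ℝ≥0∞).toReal}.Finite := Filter.eventually_cofinite.mp hev
  exact hS (hfin.subset fun i hi => by
    simp only [Set.mem_setOf_eq, hconst i hi, lt_self_iff_false, not_false_iff])

/-- With two double cosets, `G₀` acts transitively on nontrivial cosets. -/
lemma stmt19_trans {G : Type*} [Group G] (G₀ : Subgroup G)
    (hdc : Nat.card (DoubleCoset.Quotient (G₀ : Set G) (G₀ : Set G)) = 2)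
    {q r : G ⧸ G₀} (hq : q ≠ ((1 : G) : G ⧸ G₀)) (hr : r ≠ ((1 : G) : G ⧸ G₀)) :
    ∃ g ∈ G₀, g • q = r := by
  obtain ⟨y, rfl⟩ := QuotientGroup.mk_surjective q
  obtain ⟨z, rfl⟩ := QuotientGroup.mk_surjective r
  have hy : y ∉ G₀ := by
    intro h; exact hq ((QuotientGroup.eq ).mpr (by simpa using G₀.inv_mem h))
  have hz : z ∉ G₀ := by
    intro h; exact hr ((QuotientGroup.eq ).mpr (by simpa using G₀.inv_mem h))
  -- two double cosets ⇒ mk y = mk z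
  have hkey : DoubleCoset.mk G₀ G₀ y = DoubleCoset.mk G₀ G₀ z := by
    obtain ⟨w, hw, hw'⟩ := (Nat.card_eq_two_iff' (DoubleCoset.mk G₀ G₀ (1 : G))).mp hdc
    have hmk : ∀ a : G, a ∉ G₀ → DoubleCoset.mk G₀ G₀ a ≠ DoubleCoset.mk G₀ G₀ 1 := by
      intro a ha hEq
      obtain ⟨h, hh, k, hk, h1⟩ := (DoubleCoset.eq _ _ _ _).mp hEq
      apply ha
      have ha2 : a = h⁻¹ * 1 * k⁻¹ := by rw [h1]; group
      rw [ha2]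
      simpa using G₀.mul_mem (G₀.inv_mem hh) (G₀.inv_mem hk)
    rw [hw' _ (hmk y hy), hw' _ (hmk z hz)]
  obtain ⟨h, hh, k, hk, rfl⟩ := (DoubleCoset.eq _ _ _ _).mp hkey
  refine ⟨h, hh, ?_⟩
  rw [MulAction.Quotient.smul_mk]
  refine QuotientGroup.eq.mpr ?_
  have hkk : (h * y)⁻¹ * (h * y * k) = k := by group
  rw [smul_eq_mul, hkk]; exact hk

/-- A `G₀`-invariant ℓ² vector vanishes at any tuple with a nontrivial coordinate. -/
lemma stmt19_vanish {G : Type*} [Group G] (G₀ : Subgroup G)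
    (hinf : Infinite (G ⧸ G₀))
    (hdc : Nat.card (DoubleCoset.Quotient (G₀ : Set G) (G₀ : Set G)) = 2)
    {n : ℕ} (f : lp (fun _ : Fin n → G ⧸ G₀ => ℂ) 2)
    (hf : ∀ g ∈ G₀, ∀ x : Fin n → G ⧸ G₀,
      (f : (Fin n → G ⧸ G₀) → ℂ) (fun i => g • x i) = (f : (Fin n → G ⧸ G₀) → ℂ) x)
    (x : Fin n → G ⧸ G₀) (i : Fin n) (hx : x i ≠ ((1 : G) : G ⧸ G₀)) :
    (f : (Fin n → G ⧸ G₀) → ℂ) x = 0 := by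
  by_contra hne
  set S : Set (Fin n → G ⧸ G₀) := {y | ∃ g ∈ G₀, (fun j => g • x j) = y} with hSdef
  have hconst : ∀ y ∈ S, (f : (Fin n → G ⧸ G₀) → ℂ) y = (f : (Fin n → G ⧸ G₀) → ℂ) x := by
    rintro y ⟨g, hg, rfl⟩; exact hf g hg x
  have hTsub : {r : G ⧸ G₀ | r ≠ ((1 : G) : G ⧸ G₀)} ⊆ (fun y => y i) '' S := by
    intro r hr
    obtain ⟨g, hg, hgr⟩ := stmt19_trans G₀ hdc hx hr
    exact ⟨fun j => g • x j, ⟨g, hg, rfl⟩, hgr⟩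
  have hTinf : {r : G ⧸ G₀ | r ≠ ((1 : G) : G ⧸ G₀)}.Infinite := by
    have h2 := (Set.infinite_univ (α := G ⧸ G₀)).diff
      (Set.finite_singleton (((1 : G)) : G ⧸ G₀))
    exact h2.mono fun r hr => hr.2
  have hSinf : S.Infinite := Set.Infinite.of_image _ (hTinf.mono hTsub)
  exact stmt19_decay f _ hne hSinf hconst

/-- let `G₀ ⊂ G₁` be countable i.c.c. groups with `[G₁ : G₀] = ∞` and
exactly two double cosets `G₀\G₁/G₀`, and let `K = ℓ²(G₁/G₀)`, with `G₁` acting diagonally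
on `K^{⊗n} = ℓ²((G₁/G₀)ⁿ)` by left translation.  Then (1) the `G₀`-invariant vectors in
`K^{⊗n}` form the one-dimensional space spanned by `δ_{G₀} ⊗ ⋯ ⊗ δ_{G₀}` (which is itself
`G₀`-invariant), and (2) the only `G₁`-invariant vector in `K^{⊗n}` is zero. -/
theorem stmt19 {G : Type*} [Group G] [Countable G]
    (hicc : ∀ g : G, g ≠ 1 → {h : G | IsConj g h}.Infinite)
    (G₀ : Subgroup G) [DecidableEq (G ⧸ G₀)]
    (hinf : Infinite (G ⧸ G₀))
    (hdc : Nat.card (DoubleCoset.Quotient (G₀ : Set G) (G₀ : Set G)) = 2)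
    (n : ℕ) (hn : 0 < n) :
    ((∀ g ∈ G₀, ∀ x : Fin n → G ⧸ G₀,
        ((lp.single 2 (fun _ => ((1 : G) : G ⧸ G₀)) (1 : ℂ) :
            lp (fun _ : Fin n → G ⧸ G₀ => ℂ) 2) : (Fin n → G ⧸ G₀) → ℂ) (fun i => g • x i)
          = ((lp.single 2 (fun _ => ((1 : G) : G ⧸ G₀)) (1 : ℂ) :
            lp (fun _ : Fin n → G ⧸ G₀ => ℂ) 2) : (Fin n → G ⧸ G₀) → ℂ) x) ∧
      (∀ f : lp (fun _ : Fin n → G ⧸ G₀ => ℂ) 2,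
        (∀ g ∈ G₀, ∀ x : Fin n → G ⧸ G₀,
          (f : (Fin n → G ⧸ G₀) → ℂ) (fun i => g • x i) = (f : (Fin n → G ⧸ G₀) → ℂ) x) →
        ∃ c : ℂ, f = c • (lp.single 2 (fun _ => ((1 : G) : G ⧸ G₀)) (1 : ℂ)))) ∧
    (∀ f : lp (fun _ : Fin n → G ⧸ G₀ => ℂ) 2,
      (∀ (g : G) (x : Fin n → G ⧸ G₀),
        (f : (Fin n → G ⧸ G₀) → ℂ) (fun i => g • x i) = (f : (Fin n → G ⧸ G₀) → ℂ) x) →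
      f = 0) := by
  have hone : ∀ g ∈ G₀, ∀ q : G ⧸ G₀,
      (g • q = ((1 : G) : G ⧸ G₀)) ↔ q = ((1 : G) : G ⧸ G₀) := by
    intro g hg q
    constructor
    · intro h
      have : q = g⁻¹ • (((1 : G)) : G ⧸ G₀) := by rw [← h, inv_smul_smul]
      rw [this, MulAction.Quotient.smul_mk]
      exact QuotientGroup.eq.mpr (by simpa using G₀.inv_mem hg)
    · rintro rfl
      rw [MulAction.Quotient.smul_mk]
      exact QuotientGroup.eq.mpr (by simpa using G₀.inv_mem hg)
  refine ⟨⟨?_, ?_⟩, ?_⟩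
  · -- δ is G₀-invariant
    intro g hg x
    by_cases hx : x = fun _ => ((1 : G) : G ⧸ G₀)
    · subst hx
      have h1 : (fun i : Fin n => g • (((1 : G)) : G ⧸ G₀)) = fun _ => ((1 : G) : G ⧸ G₀) :=
        funext fun i => (hone g hg _).mpr rfl
      rw [h1]
    · have h2 : (fun i => g • x i) ≠ fun _ => ((1 : G) : G ⧸ G₀) := by
        intro h
        apply hx
        funext i
        exact (hone g hg (x i)).mp (congrFun h i)
      rw [lp.single_apply_ne _ _ _ h2, lp.single_apply_ne _ _ _ hx]
  · -- G₀-invariant vectors are multiples of δ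
    intro f hf
    refine ⟨(f : (Fin n → G ⧸ G₀) → ℂ) (fun _ => ((1 : G) : G ⧸ G₀)), lp.ext ?_⟩
    funext x
    have hcoe : ∀ (c : ℂ) (gg : lp (fun _ : Fin n → G ⧸ G₀ => ℂ) 2),
        ((c • gg : lp (fun _ : Fin n → G ⧸ G₀ => ℂ) 2) : (Fin n → G ⧸ G₀) → ℂ) x
          = c • (gg : (Fin n → G ⧸ G₀) → ℂ) x := fun _ _ => rfl
    rw [hcoe]
    by_cases hx : x = fun _ => ((1 : G) : G ⧸ G₀)
    · subst hx
      rw [lp.single_apply_self]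
      simp
    · have : ∃ i, x i ≠ ((1 : G) : G ⧸ G₀) := by
        by_contra h
        push_neg at h
        exact hx (funext h)
      obtain ⟨i, hi⟩ := this
      rw [stmt19_vanish G₀ hinf hdc f hf x i hi, lp.single_apply_ne _ _ _ hx]
      simp
  · -- only G-invariant vector is 0
    intro f hf
    refine lp.ext ?_
    funext x
    show (f : (Fin n → G ⧸ G₀) → ℂ) x = 0
    by_cases hx : x = fun _ => ((1 : G) : G ⧸ G₀)
    · subst hx
      by_contra hne
      set S : Set (Fin n → G ⧸ G₀) := {y | ∃ g : G, (fun j : Fin n => (g : G ⧸ G₀)) = y} with hS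
      have hconst : ∀ y ∈ S, (f : (Fin n → G ⧸ G₀) → ℂ) y
          = (f : (Fin n → G ⧸ G₀) → ℂ) (fun _ => ((1 : G) : G ⧸ G₀)) := by
        rintro y ⟨g, rfl⟩
        have : (fun j : Fin n => (g : G ⧸ G₀))
            = fun j : Fin n => g • (((1 : G)) : G ⧸ G₀) := by
          funext j
          simp [MulAction.Quotient.smul_mk]
        rw [this]
        exact hf g _
      have hTsub : (Set.univ : Set (G ⧸ G₀)) ⊆ (fun y => y ⟨0, hn⟩) '' S := by
        rintro r -
        obtain ⟨g, rfl⟩ := QuotientGroup.mk_surjective r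
        exact ⟨fun _ => (g : G ⧸ G₀), ⟨g, rfl⟩, rfl⟩
      have hSinf : S.Infinite :=
        Set.Infinite.of_image _ (Set.infinite_univ.mono hTsub)
      exact stmt19_decay f _ hne hSinf hconst
    · have : ∃ i, x i ≠ ((1 : G) : G ⧸ G₀) := by
        by_contra h
        push_neg at h
        exact hx (funext h)
      obtain ⟨i, hi⟩ := this
      exact stmt19_vanish G₀ hinf hdc f (fun g _ => hf g) x i hi
end
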